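/- Let α, β > 0 and let m, s be real with 0 < m + 1/β and 0 < s - m - 1/β. Then ∫₀^∞ log((x/α)^β) · ((x/α)^β)^m / (1 + (x/α)^β)^s dx = (α/β) · B(s - m - 1/β, m + 1/β) · [Ψ(m + 1/β) - Ψ(s - m - 1/β)]. -/

import Mathlib

/-!
After the substitution `u = (x/α)^β` the integral becomes `(α/β) ∫₀^∞ log u · u^(a-1) (1+u)^(-s) du`
with `a = m + 1/β`. This is the derivative in `a` of the Mellin transform
`∫₀^∞ u^(a-1) (1+u)^(-s) du`, which the substitution `u = t/(1-t)` identifies with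
`B(a, s-a) = Γ(a) Γ(s-a) / Γ(s)`; differentiating the Gamma quotient gives
`B(a, s-a) (Ψ(a) - Ψ(s-a))`.
-/

open MeasureTheory Set

/-- The Beta function `B(a,b) = ∫₀¹ x^(a-1) (1-x)^(b-1) dx`. -/
noncomputable def Beta (a b : ℝ) : ℝ := ∫ x in Ioo (0:ℝ) 1, x ^ (a-1) * (1-x) ^ (b-1)

/-- The digamma function, the logarithmic derivative of the Gamma function. -/
noncomputable def digamma (x : ℝ) : ℝ := deriv (fun y => Real.log (Real.Gamma y)) x

open Filter Topology Asymptotics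

lemma ofReal_Beta (a b : ℝ) : (Beta a b : ℂ) = Complex.betaIntegral a b := by
  rw [Complex.betaIntegral, intervalIntegral.integral_of_le zero_le_one, Beta,
    ← integral_Ioc_eq_integral_Ioo, ← integral_complex_ofReal]
  refine setIntegral_congr_fun measurableSet_Ioc fun x hx => ?_
  push_cast
  rw [Complex.ofReal_cpow hx.1.le, Complex.ofReal_cpow (sub_nonneg.2 hx.2)]
  push_cast; rfl

lemma Beta_eq_Gamma_mul_Gamma_div {a b : ℝ} (ha : 0 < a) (hb : 0 < b) :
    Beta a b = Real.Gamma a * Real.Gamma b / Real.Gamma (a + b) := by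
  rw [← ProbabilityTheory.beta, ProbabilityTheory.beta_eq_betaIntegralReal a b ha hb,
    ← ofReal_Beta, Complex.ofReal_re]

lemma Beta_comm {a b : ℝ} (ha : 0 < a) (hb : 0 < b) : Beta a b = Beta b a := by
  rw [Beta_eq_Gamma_mul_Gamma_div ha hb, Beta_eq_Gamma_mul_Gamma_div hb ha, mul_comm, add_comm]

lemma hasDerivAt_Gamma_of_pos {x : ℝ} (hx : 0 < x) :
    HasDerivAt Real.Gamma (digamma x * Real.Gamma x) x := by
  have hd : DifferentiableAt ℝ Real.Gamma x :=
    Real.differentiableAt_Gamma fun m => by linarith [(Nat.cast_nonneg m : (0:ℝ) ≤ m)]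
  have hdig : digamma x = deriv Real.Gamma x / Real.Gamma x :=
    (hd.hasDerivAt.log (Real.Gamma_pos_of_pos hx).ne').deriv
  rw [hdig, div_mul_cancel₀ _ (Real.Gamma_pos_of_pos hx).ne']
  exact hd.hasDerivAt

lemma hasDerivAt_Beta_sub {a s : ℝ} (ha : 0 < a) (has : a < s) :
    HasDerivAt (fun x => Beta x (s - x)) (Beta a (s - a) * (digamma a - digamma (s - a))) a := by
  have hsa : 0 < s - a := sub_pos.2 has
  have hG : HasDerivAt (fun x => Real.Gamma x * Real.Gamma (s - x) / Real.Gamma s)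
      (Beta a (s - a) * (digamma a - digamma (s - a))) a := by
    have h := ((hasDerivAt_Gamma_of_pos ha).mul
      ((hasDerivAt_Gamma_of_pos hsa).comp a ((hasDerivAt_id a).const_sub s))).div_const
      (Real.Gamma s)
    refine h.congr_deriv ?_
    rw [Beta_eq_Gamma_mul_Gamma_div ha hsa, add_sub_cancel]
    simp only [Function.comp_apply]; ring
  refine hG.congr_of_eventuallyEq ?_
  filter_upwards [Ioo_mem_nhds ha has] with x hx
  rw [Beta_eq_Gamma_mul_Gamma_div hx.1 (sub_pos.2 hx.2), add_sub_cancel]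

lemma image_div_one_sub_Ioo : (fun t : ℝ => t / (1 - t)) '' Ioo 0 1 = Ioi 0 := by
  refine Subset.antisymm ?_ fun u (hu : 0 < u) => ⟨u / (1 + u), ⟨by positivity, ?_⟩, ?_⟩
  · rintro _ ⟨t, ht, rfl⟩
    exact div_pos ht.1 (sub_pos.2 ht.2)
  · rw [div_lt_one (by positivity)]; linarith
  · field_simp; ring

lemma integral_Ioi_eq_integral_Ioo_div_one_sub (g : ℝ → ℝ) :
    ∫ u in Ioi 0, g u = ∫ t in Ioo 0 1, ((1 - t) ^ 2)⁻¹ * g (t / (1 - t)) := by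
  have hderiv : ∀ t ∈ Ioo (0:ℝ) 1,
      HasDerivWithinAt (fun t : ℝ => t / (1 - t)) ((1 - t) ^ 2)⁻¹ (Ioo 0 1) t := by
    intro t ht
    have h1t : 1 - t ≠ 0 := (sub_pos.2 ht.2).ne'
    have h := (hasDerivAt_id t).div ((hasDerivAt_const t 1).sub (hasDerivAt_id t)) h1t
    refine (h.congr_deriv ?_).hasDerivWithinAt
    simp only [Pi.sub_apply, id]; field_simp; ring
  have hinj : InjOn (fun t : ℝ => t / (1 - t)) (Ioo 0 1) := by
    intro t ht t' ht' h
    rw [div_eq_div_iff (sub_pos.2 ht.2).ne' (sub_pos.2 ht'.2).ne'] at h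
    linarith
  rw [← image_div_one_sub_Ioo,
    integral_image_eq_integral_abs_deriv_smul measurableSet_Ioo hderiv hinj]
  refine setIntegral_congr_fun measurableSet_Ioo fun t _ => ?_
  rw [smul_eq_mul, abs_of_nonneg (by positivity)]

lemma integral_rpow_mul_one_add_rpow_neg (a s : ℝ) :
    ∫ t in Ioi 0, t ^ (a - 1) * (1 + t) ^ (-s) = Beta a (s - a) := by
  rw [integral_Ioi_eq_integral_Ioo_div_one_sub, Beta]
  refine setIntegral_congr_fun measurableSet_Ioo fun t ht => ?_
  have h1t : 0 < 1 - t := sub_pos.2 ht.2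
  have hsum : 1 + t / (1 - t) = (1 - t)⁻¹ := by field_simp; ring
  rw [hsum, Real.div_rpow ht.1.le h1t.le, Real.inv_rpow h1t.le, ← Real.rpow_neg h1t.le, neg_neg,
    ← Real.rpow_natCast]
  have hsplit :
      (1 - t) ^ (s - a - 1) = (1 - t) ^ s / ((1 - t) ^ ((2:ℕ):ℝ) * (1 - t) ^ (a - 1)) := by
    rw [← Real.rpow_add h1t, ← Real.rpow_sub h1t]; congr 1; push_cast; ring
  rw [hsplit]
  field_simp

lemma mellin_ofReal (f : ℝ → ℝ) (y : ℝ) :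
    mellin (fun t => (f t : ℂ)) y = ((∫ t in Ioi 0, t ^ (y - 1) * f t : ℝ) : ℂ) := by
  rw [mellin, ← integral_complex_ofReal]
  refine setIntegral_congr_fun measurableSet_Ioi fun t (ht : 0 < t) => ?_
  rw [smul_eq_mul, Complex.ofReal_mul, Complex.ofReal_cpow ht.le]
  push_cast; rfl

lemma hasDerivAt_integral_rpow_mul {g : ℝ → ℝ} {a b x : ℝ} (hg : LocallyIntegrableOn g (Ioi 0))
    (hg_top : g =O[atTop] (· ^ (-a))) (hxa : x < a) (hg_bot : g =O[𝓝[>] 0] (· ^ (-b)))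
    (hbx : b < x) :
    HasDerivAt (fun y => ∫ t in Ioi 0, t ^ (y - 1) * g t)
      (∫ t in Ioi 0, t ^ (x - 1) * (Real.log t * g t)) x := by
  have hgc : LocallyIntegrableOn (fun t => (g t : ℂ)) (Ioi 0) := fun t ht =>
    let ⟨u, hu, hi⟩ := hg t ht; ⟨u, hu, hi.ofReal⟩
  have h := (mellin_hasDerivAt_of_isBigO_rpow (s := x) hgc
    (Complex.isBigO_ofReal_left.2 hg_top) (by simpa using hxa)
    (Complex.isBigO_ofReal_left.2 hg_bot) (by simpa using hbx)).2.real_of_complex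
  have hlog : (fun t => Real.log t • (g t : ℂ)) = fun t => ((Real.log t * g t : ℝ) : ℂ) := by
    funext t; rw [Complex.real_smul, Complex.ofReal_mul]
  simpa only [hlog, mellin_ofReal, Complex.ofReal_re] using h

lemma isBigO_one_add_rpow_neg_atTop {s : ℝ} (hs : 0 ≤ s) :
    (fun t : ℝ => (1 + t) ^ (-s)) =O[atTop] (· ^ (-s)) := by
  refine IsBigO.of_bound 1 ?_
  filter_upwards [eventually_gt_atTop 0] with t ht
  rw [one_mul, Real.norm_of_nonneg (by positivity), Real.norm_of_nonneg (by positivity)]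
  exact Real.rpow_le_rpow_of_nonpos ht (by linarith) (neg_nonpos.2 hs)

-- The bound `O(1)` is written as `O(t ^ (-0))`, the shape `mellin_hasDerivAt_of_isBigO_rpow` expects.
lemma isBigO_one_add_rpow_neg_nhdsGT_zero {s : ℝ} (hs : 0 ≤ s) :
    (fun t : ℝ => (1 + t) ^ (-s)) =O[𝓝[>] 0] (· ^ (-0 : ℝ)) := by
  refine IsBigO.of_bound 1 ?_
  filter_upwards [self_mem_nhdsWithin] with t (ht : 0 < t)
  rw [neg_zero, Real.rpow_zero, norm_one, one_mul, Real.norm_of_nonneg (by positivity)]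
  exact Real.rpow_le_one_of_one_le_of_nonpos (by linarith) (neg_nonpos.2 hs)

lemma integral_rpow_mul_log_mul_one_add_rpow_neg {a s : ℝ} (ha : 0 < a) (has : a < s) :
    ∫ t in Ioi 0, t ^ (a - 1) * (Real.log t * (1 + t) ^ (-s))
      = Beta a (s - a) * (digamma a - digamma (s - a)) := by
  have hs : 0 ≤ s := by linarith
  have hcont : ContinuousOn (fun t : ℝ => (1 + t) ^ (-s)) (Ioi 0) :=
    ContinuousOn.rpow_const (by fun_prop) fun t (ht : 0 < t) => Or.inl (by positivity)
  have h := hasDerivAt_integral_rpow_mul (hcont.locallyIntegrableOn measurableSet_Ioi)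
    (isBigO_one_add_rpow_neg_atTop hs) has (isBigO_one_add_rpow_neg_nhdsGT_zero hs) ha
  simp only [integral_rpow_mul_one_add_rpow_neg] at h
  exact h.unique (hasDerivAt_Beta_sub ha has)

lemma integral_comp_rpow_Ioi_eq (g : ℝ → ℝ) {β : ℝ} (hβ : 0 < β) :
    ∫ x in Ioi 0, g (x ^ β) = β⁻¹ * ∫ u in Ioi 0, u ^ (β⁻¹ - 1) * g u := by
  rw [← integral_const_mul,
    ← integral_comp_rpow_Ioi_of_pos (g := fun u => β⁻¹ * (u ^ (β⁻¹ - 1) * g u)) hβ]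
  refine setIntegral_congr_fun measurableSet_Ioi fun x (hx : 0 < x) => ?_
  rw [smul_eq_mul, ← Real.rpow_mul hx.le, mul_sub, mul_inv_cancel₀ hβ.ne', mul_one]
  have : x ^ (β - 1) * x ^ (1 - β) = 1 := by
    rw [← Real.rpow_add hx, sub_add_sub_cancel', sub_self, Real.rpow_zero]
  field_simp
  linear_combination -g (x ^ β) * this

lemma integral_comp_div_rpow_Ioi (g : ℝ → ℝ) {α β : ℝ} (hα : 0 < α) (hβ : 0 < β) :
    ∫ x in Ioi 0, g ((x / α) ^ β) = α / β * ∫ u in Ioi 0, u ^ (β⁻¹ - 1) * g u := by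
  simp_rw [div_eq_inv_mul _ α]
  rw [integral_comp_mul_left_Ioi (fun y => g (y ^ β)) 0 (inv_pos.2 hα), mul_zero,
    integral_comp_rpow_Ioi_eq g hβ, inv_inv, smul_eq_mul]
  ring

theorem log_beta_integral_substituted (α β m s : ℝ) (hα : 0 < α) (hβ : 0 < β)
    (hm : 0 < m + 1/β) (hs : 0 < s - m - 1/β) :
    (∫ x in Ioi (0:ℝ), Real.log ((x/α) ^ β) * ((x/α) ^ β) ^ m / (1 + (x/α) ^ β) ^ s)
      = (α/β) * Beta (s - m - 1/β) (m + 1/β)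
          * (digamma (m + 1/β) - digamma (s - m - 1/β)) := by
  rw [sub_sub] at hs ⊢
  have hintegrand : ∀ u ∈ Ioi (0:ℝ), u ^ (β⁻¹ - 1) * (Real.log u * u ^ m / (1 + u) ^ s)
      = u ^ (m + 1/β - 1) * (Real.log u * (1 + u) ^ (-s)) := fun u (hu : 0 < u) => by
    rw [Real.rpow_neg (by positivity), show m + 1/β - 1 = β⁻¹ - 1 + m by ring,
      Real.rpow_add hu]
    ring
  rw [integral_comp_div_rpow_Ioi (fun u => Real.log u * u ^ m / (1 + u) ^ s) hα hβ,
    setIntegral_congr_fun measurableSet_Ioi hintegrand,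
    integral_rpow_mul_log_mul_one_add_rpow_neg hm (sub_pos.1 hs), Beta_comm hm hs]
  ring
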